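/- For real α > -1 and real β, λ with β - λ > -1, and natural number n: ∫_{-1}^1 (1-t)^α (1+t)^{β-λ} P_n^{(α,β)}(t) dt = 2^{α+β-λ+1} · C(-λ, n) · B(α+n+1, β-λ+1), where C(-λ, n) = (-λ)(-λ-1)⋯(-λ-n+1)/n!. -/

import Mathlib

open scoped Real Topology
open Filter

noncomputable def poch (x : ℝ) (n : ℕ) : ℝ := ∏ i ∈ Finset.range n, (x + i)

noncomputable def pochC (x : ℂ) (n : ℕ) : ℂ := ∏ i ∈ Finset.range n, (x + i)

/-- Jacobi polynomial `P_n^{(α,β)}(t)` via its hypergeometric representation. -/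
noncomputable def jacobiP (α β : ℝ) (n : ℕ) (t : ℝ) : ℝ :=
  poch (α + 1) n / n.factorial *
    ∑ k ∈ Finset.range (n + 1),
      poch (-(n : ℝ)) k * poch ((n : ℝ) + α + β + 1) k / (poch (α + 1) k * k.factorial) *
        ((1 - t) / 2) ^ k

/-- Gauss hypergeometric series (real). -/
noncomputable def hyp2F1 (a b c x : ℝ) : ℝ :=
  ∑' k : ℕ, poch a k * poch b k / (poch c k * k.factorial) * x ^ k

/-- Gauss hypergeometric series (complex). -/
noncomputable def hyp2F1C (a b c x : ℂ) : ℂ :=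
  ∑' k : ℕ, pochC a k * pochC b k / (pochC c k * k.factorial) * x ^ k

/-- Beta function `B(a,b) = Γ(a)Γ(b)/Γ(a+b)`. -/
noncomputable def betaR (a b : ℝ) : ℝ := Real.Gamma a * Real.Gamma b / Real.Gamma (a + b)

/-- Generalized binomial coefficient `C(x,n) = x(x-1)⋯(x-n+1)/n!`. -/
noncomputable def genBinom (x : ℝ) (n : ℕ) : ℝ :=
  (∏ i ∈ Finset.range n, (x - i)) / n.factorial

/-- Gegenbauer (ultraspherical) polynomial `C_n^{(a)}(t)`. -/
noncomputable def gegenbauerC (a : ℝ) (n : ℕ) (t : ℝ) : ℝ :=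
  ∑ k ∈ Finset.range (n / 2 + 1),
    (-1) ^ k * poch a (n - k) / (k.factorial * (n - 2 * k).factorial) * (2 * t) ^ (n - 2 * k)

/-! ### Pochhammer lemmas -/

lemma poch_zero (x : ℝ) : poch x 0 = 1 := by simp [poch]

lemma poch_succ (x : ℝ) (n : ℕ) : poch x (n+1) = poch x n * (x + n) :=
  Finset.prod_range_succ _ _

lemma poch_succ' (x : ℝ) (n : ℕ) : poch x (n+1) = x * poch (x+1) n := by
  rw [poch, Finset.prod_range_succ']
  simp only [Nat.cast_zero, add_zero, mul_comm]
  congr 1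
  · unfold poch
    apply Finset.prod_congr rfl
    intro i _
    push_cast
    ring

lemma poch_pos {x : ℝ} (hx : 0 < x) (n : ℕ) : 0 < poch x n :=
  Finset.prod_pos fun i _ => by positivity

lemma poch_add (x : ℝ) (m n : ℕ) : poch x (m + n) = poch x m * poch (x + m) n := by
  induction n with
  | zero => simp [poch_zero]
  | succ n ih => rw [← Nat.add_assoc, poch_succ, ih, poch_succ]; push_cast; ring

lemma Gamma_poch {x : ℝ} (hx : 0 < x) (n : ℕ) :
    Real.Gamma (x + n) = poch x n * Real.Gamma x := by
  induction n with
  | zero => simp [poch_zero]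
  | succ n ih =>
    have h1 : x + (n+1 : ℕ) = (x + n) + 1 := by push_cast; ring
    rw [h1, Real.Gamma_add_one (by positivity), ih, poch_succ]; ring

/-! ### Chu–Vandermonde -/

lemma vandermonde (n : ℕ) : ∀ b c : ℝ,
    ∑ k ∈ Finset.range (n+1),
      (-1)^k * (n.choose k : ℝ) * poch b k * poch (c + k) (n - k) = poch (c - b) n := by
  induction n with
  | zero => intro b c; simp [poch_zero]
  | succ n ih =>
    intro b c
    have key : ∀ k ∈ Finset.range (n+2),
        (-1)^k * ((n+1).choose k : ℝ) * poch b k * poch (c + k) (n + 1 - k)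
        = (-1)^k * (n.choose k : ℝ) * poch b k * poch (c + k) (n - k) * (c + n)
          + (if hk : k = 0 then 0 else
            (-b) * ((-1)^(k-1) * (n.choose (k-1) : ℝ) * poch (b+1) (k-1) * poch ((c+1) + (k-1:ℕ)) (n - (k-1)))) := by
      intro k hk
      simp only [Finset.mem_range] at hk
      match k with
      | 0 =>
        simp only [dif_pos, pow_zero, Nat.choose_zero_right, Nat.cast_one, poch_zero,
          Nat.cast_zero, add_zero, Nat.sub_zero, Nat.add_sub_cancel]
        rw [poch_succ]
        ring
      | (k+1) =>
        simp only [Nat.add_sub_cancel, dif_neg (Nat.succ_ne_zero k)]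
        rw [Nat.choose_succ_succ]
        push_cast
        by_cases hkn : k + 1 ≤ n
        · have h2 : n - k = (n - (k+1)) + 1 := by omega
          have h4 : c + 1 + (k:ℝ) + ((n - (k+1) : ℕ) : ℝ) = c + n := by
            rw [Nat.cast_sub hkn]; push_cast; ring
          rw [show c + ((k:ℝ)+1) = c+1+(k:ℝ) from by ring, h2,
            poch_succ (c+1+(k:ℝ)), h4, poch_succ' b]
          ring
        · have hk1 : k = n := by omega
          subst hk1
          have h6 : k - (k+1) = 0 := by omega
          simp only [Nat.choose_succ_self, Nat.cast_zero, h6, poch_zero]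
          rw [poch_succ' b]
          ring
    rw [Finset.sum_congr rfl key, Finset.sum_add_distrib]
    have hg : ∑ k ∈ Finset.range (n+2),
        (-1)^k * (n.choose k : ℝ) * poch b k * poch (c + k) (n - k) * (c + n)
        = poch (c - b) n * (c + n) := by
      rw [Finset.sum_range_succ]
      simp only [Nat.choose_succ_self, Nat.cast_zero, zero_mul, mul_zero, add_zero]
      rw [← Finset.sum_mul, ih b c]
    have hh : ∑ k ∈ Finset.range (n+2),
        (if hk : k = 0 then (0:ℝ) else
          (-b) * ((-1)^(k-1) * (n.choose (k-1) : ℝ) * poch (b+1) (k-1) * poch ((c+1) + (k-1:ℕ)) (n - (k-1))))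
        = (-b) * poch (c - b) n := by
      rw [Finset.sum_range_succ']
      simp only [dif_neg (Nat.succ_ne_zero _), dif_pos, Nat.add_sub_cancel, add_zero]
      rw [← Finset.mul_sum]
      have : ∑ k ∈ Finset.range (n+1),
          (-1)^k * (n.choose k : ℝ) * poch (b+1) k * poch ((c+1) + k) (n - k)
          = poch (c - b) n := by
        have := ih (b+1) (c+1)
        simpa using this
      rw [this]
    rw [hg, hh, poch_succ]
    ring

lemma poch_neg_nat (n : ℕ) : ∀ k ≤ n, poch (-(n:ℝ)) k = (-1)^k * (n.choose k) * (k.factorial) := by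
  intro k
  induction k with
  | zero => intro _; simp [poch_zero]
  | succ k ihk =>
    intro hk
    have hk' : k ≤ n := by omega
    rw [poch_succ, ihk hk']
    have hcast : ((n - k : ℕ) : ℝ) = (n:ℝ) - k := by
      rw [Nat.cast_sub hk']
    have hnat : (n.choose (k+1) : ℝ) * (k+1) = (n.choose k : ℝ) * ((n:ℝ) - k) := by
      have := Nat.choose_succ_right_eq n k
      have h2 : ((n.choose (k+1) * (k+1) : ℕ) : ℝ) = ((n.choose k * (n - k) : ℕ) : ℝ) := by
        exact_mod_cast congrArg (Nat.cast : ℕ → ℝ) this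
      push_cast [hcast] at h2
      linarith [h2]
    have hfac : ((k+1).factorial : ℝ) = (k+1) * (k.factorial) := by
      push_cast [Nat.factorial_succ]; ring
    rw [hfac, pow_succ]
    linear_combination ((-1:ℝ)^k * (k.factorial:ℝ)) * hnat

lemma vandermonde' (n : ℕ) {c : ℝ} (hc : 0 < c) (b : ℝ) :
    ∑ k ∈ Finset.range (n+1), poch (-(n:ℝ)) k * poch b k / (poch c k * k.factorial)
      = poch (c - b) n / poch c n := by
  rw [eq_div_iff (poch_pos hc n).ne', ← vandermonde n b c, Finset.sum_mul]
  apply Finset.sum_congr rfl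
  intro k hk
  simp only [Finset.mem_range] at hk
  have hk' : k ≤ n := by omega
  rw [poch_neg_nat n k hk']
  have hsplit : poch c n = poch c k * poch (c + k) (n - k) := by
    conv_lhs => rw [show n = k + (n - k) from by omega]
    exact poch_add c k (n - k)
  rw [hsplit]
  have h1 : poch c k ≠ 0 := (poch_pos hc k).ne'
  have h2 : (k.factorial : ℝ) ≠ 0 := by positivity
  field_simp

/-! ### Beta integrals -/

lemma realBeta (a b : ℝ) (ha : 0 < a) (hb : 0 < b) :
    ∫ x in (0:ℝ)..1, x^(a-1) * (1-x)^(b-1) = betaR a b := by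
  have hcast : Complex.betaIntegral a b
      = ((∫ x in (0:ℝ)..1, x^(a-1) * (1-x)^(b-1) : ℝ) : ℂ) := by
    rw [Complex.betaIntegral, ← intervalIntegral.integral_ofReal]
    apply intervalIntegral.integral_congr
    intro x hx
    rw [Set.uIcc_of_le (by norm_num : (0:ℝ) ≤ 1)] at hx
    obtain ⟨h0, h1⟩ := hx
    push_cast
    rw [Complex.ofReal_cpow h0, Complex.ofReal_cpow (by linarith : (0:ℝ) ≤ 1 - x)]
    push_cast
    ring
  have key := Complex.Gamma_mul_Gamma_eq_betaIntegral
    (s := (a:ℂ)) (t := (b:ℂ)) (by simpa using ha) (by simpa using hb)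
  rw [hcast] at key
  have h1 : ((a:ℂ) + b) = ((a + b : ℝ) : ℂ) := by push_cast; ring
  rw [h1, Complex.Gamma_ofReal, Complex.Gamma_ofReal, Complex.Gamma_ofReal] at key
  have key2 : Real.Gamma a * Real.Gamma b
      = Real.Gamma (a+b) * ∫ x in (0:ℝ)..1, x^(a-1) * (1-x)^(b-1) := by
    exact_mod_cast key
  have hab : Real.Gamma (a+b) ≠ 0 := (Real.Gamma_pos_of_pos (by linarith)).ne'
  rw [betaR]
  field_simp [key2]
  rw [key2]; ring

lemma weight_integrable {p q : ℝ} (hp : -1 < p) (hq : -1 < q) :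
    IntervalIntegrable (fun t => (1-t)^p * (1+t)^q) MeasureTheory.volume (-1) 1 := by
  have h1 : IntervalIntegrable (fun t => (1-t)^p * (1+t)^q) MeasureTheory.volume (-1) 0 := by
    have hbase : IntervalIntegrable (fun t : ℝ => (1+t)^q) MeasureTheory.volume (-1) 0 := by
      have := (intervalIntegral.intervalIntegrable_rpow' hq (a := 0) (b := 1)).comp_add_right 1
      simpa [add_comm] using this
    have hcont : ContinuousOn (fun t : ℝ => (1-t)^p) (Set.uIcc (-1) 0) := by
      apply ContinuousOn.rpow_const
      · exact (continuousOn_const.sub continuousOn_id)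
      · intro x hx
        rw [Set.uIcc_of_le (by norm_num : (-1:ℝ) ≤ 0)] at hx
        left; nlinarith [hx.2]
    exact hbase.continuousOn_mul hcont
  have h2 : IntervalIntegrable (fun t => (1-t)^p * (1+t)^q) MeasureTheory.volume 0 1 := by
    have hbase : IntervalIntegrable (fun t : ℝ => (1-t)^p) MeasureTheory.volume 0 1 := by
      have := (intervalIntegral.intervalIntegrable_rpow' hp (a := 0) (b := 1)).comp_sub_left 1
      simpa using this.symm
    have hcont : ContinuousOn (fun t : ℝ => (1+t)^q) (Set.uIcc 0 1) := by
      apply ContinuousOn.rpow_const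
      · exact (continuousOn_const.add continuousOn_id)
      · intro x hx
        rw [Set.uIcc_of_le (by norm_num : (0:ℝ) ≤ 1)] at hx
        left; nlinarith [hx.1]
    exact hbase.mul_continuousOn hcont
  exact h1.trans h2

lemma betaR_comm (a b : ℝ) : betaR a b = betaR b a := by
  rw [betaR, betaR, add_comm, mul_comm]

lemma betaInt {p q : ℝ} (hp : -1 < p) (hq : -1 < q) :
    ∫ t in (-1:ℝ)..1, (1-t)^p * (1+t)^q = 2^(p+q+1) * betaR (p+1) (q+1) := by
  have hsub := intervalIntegral.integral_comp_mul_add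
    (a := (0:ℝ)) (b := 1) (f := fun t => (1-t)^p * (1+t)^q) (two_ne_zero) (-1)
  norm_num at hsub
  have heq : ∫ x in (0:ℝ)..1, (1 - (2*x + -1))^p * (2*x)^q
      = 2^p * 2^q * betaR (q+1) (p+1) := by
    have hcongr : ∀ x ∈ Set.uIcc (0:ℝ) 1,
        (1 - (2*x + -1))^p * (2*x)^q = (2^p * 2^q) * (x^(q+1-1) * (1-x)^(p+1-1)) := by
      intro x hx
      rw [Set.uIcc_of_le (by norm_num : (0:ℝ) ≤ 1)] at hx
      have h1 : (1 - (2*x + -1)) = 2 * (1 - x) := by ring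
      rw [h1, Real.mul_rpow (by norm_num) (by linarith [hx.2]),
        Real.mul_rpow (by norm_num) hx.1]
      ring_nf
    rw [intervalIntegral.integral_congr hcongr, intervalIntegral.integral_const_mul,
      realBeta (q+1) (p+1) (by linarith) (by linarith)]
  rw [heq] at hsub
  rw [betaR_comm (q+1) (p+1)] at hsub
  have h2 : (2:ℝ)^(p+q+1) = 2 * (2^p * 2^q) := by
    rw [Real.rpow_add (by norm_num : (0:ℝ) < 2), Real.rpow_add (by norm_num : (0:ℝ) < 2),
      Real.rpow_one]
    ring
  rw [h2]
  linarith [hsub]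

lemma step_k (α b : ℝ) (hα : -1 < α) (hb : -1 < b) (k : ℕ) :
    ∫ t in (-1:ℝ)..1, (1-t)^α * (1+t)^b * ((1-t)/2)^k
      = 2^(α+b+1) * betaR (α+k+1) (b+1) := by
  have hpt : ∀ t ∈ Set.uIcc (-1:ℝ) 1,
      (1-t)^α * (1+t)^b * ((1-t)/2)^k
        = (2:ℝ)^(-(k:ℝ)) * ((1-t)^(α+(k:ℝ)) * (1+t)^b) := by
    intro t ht
    rw [Set.uIcc_of_le (by norm_num : (-1:ℝ) ≤ 1)] at ht
    have hs : (0:ℝ) ≤ 1 - t := by linarith [ht.2]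
    rcases eq_or_lt_of_le hs with h | h
    · -- 1 - t = 0
      rw [← h]
      rcases Nat.eq_zero_or_pos k with hk | hk
      · subst hk
        norm_num
      · have h1 : (0:ℝ)^(α+(k:ℝ)) = 0 := by
          apply Real.zero_rpow
          have : (1:ℝ) ≤ (k:ℝ) := by exact_mod_cast hk
          linarith
        rw [show (0:ℝ)/2 = 0 from by norm_num, h1, zero_pow (by omega : k ≠ 0)]
        ring
    · have h2k : ((2:ℝ))^k ≠ 0 := by positivity
      rw [div_pow, ← Real.rpow_natCast (1-t) k, Real.rpow_add h,
        Real.rpow_neg (by norm_num : (0:ℝ) ≤ 2), Real.rpow_natCast 2 k]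
      field_simp
  rw [intervalIntegral.integral_congr hpt, intervalIntegral.integral_const_mul,
    betaInt (by linarith [Nat.cast_nonneg (α := ℝ) k] : -1 < α + (k:ℝ)) hb,
    ← mul_assoc, ← Real.rpow_add (by norm_num : (0:ℝ) < 2),
    show -(k:ℝ) + (α + (k:ℝ) + b + 1) = α + b + 1 from by ring]

lemma betaR_shift {x y : ℝ} (hx : 0 < x) (hy : 0 < y) (k : ℕ) :
    betaR (x + k) y = poch x k / poch (x + y) k * betaR x y := by
  rw [betaR, betaR, Gamma_poch hx k,
    show x + (k:ℝ) + y = (x + y) + (k:ℝ) from by ring, Gamma_poch (by positivity) k]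
  have h1 : Real.Gamma (x+y) ≠ 0 := (Real.Gamma_pos_of_pos (by positivity)).ne'
  have h2 : poch (x+y) k ≠ 0 := (poch_pos (by positivity) k).ne'
  field_simp

lemma poch_reflect (lam : ℝ) (n : ℕ) :
    poch (1 - lam - n) n = ∏ i ∈ Finset.range n, (-lam - i) := by
  rw [poch, ← Finset.prod_range_reflect (fun j : ℕ => -lam - (j:ℝ)) n]
  apply Finset.prod_congr rfl
  intro i hi
  simp only [Finset.mem_range] at hi
  have h1 : n - 1 - i = n - (i+1) := by omega
  have h2 : ((n - (i+1) : ℕ) : ℝ) = (n:ℝ) - (i+1) := by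
    rw [Nat.cast_sub (by omega)]; push_cast; ring
  rw [h1, h2]
  ring

/-- `∫_{-1}^1 (1-t)^α (1+t)^{β-λ} P_n^{(α,β)}(t) dt = 2^{α+β-λ+1} C(-λ,n) B(α+n+1, β-λ+1)`. -/
theorem integral_jacobi_modified_weight (α β lam : ℝ) (n : ℕ) (hα : -1 < α)
    (hβlam : -1 < β - lam) :
    ∫ t in (-1 : ℝ)..1, (1 - t) ^ α * (1 + t) ^ (β - lam) * jacobiP α β n t =
      2 ^ (α + β - lam + 1) * genBinom (-lam) n * betaR (α + n + 1) (β - lam + 1) := by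
  have hfac : ((n.factorial : ℝ)) ≠ 0 := by positivity
  set b : ℝ := β - lam with hbdef
  have hptw : ∀ t ∈ Set.uIcc (-1:ℝ) 1, (1 - t) ^ α * (1 + t) ^ b * jacobiP α β n t
      = ∑ k ∈ Finset.range (n+1),
          (poch (α+1) n / n.factorial *
            (poch (-(n:ℝ)) k * poch ((n:ℝ)+α+β+1) k / (poch (α+1) k * k.factorial))) *
          ((1-t)^α * (1+t)^b * ((1-t)/2)^k) := by
    intro t _
    rw [jacobiP, Finset.mul_sum, Finset.mul_sum]
    apply Finset.sum_congr rfl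
    intro k _
    ring
  rw [intervalIntegral.integral_congr hptw, intervalIntegral.integral_finset_sum (by
    intro k _
    apply IntervalIntegrable.const_mul
    refine (weight_integrable hα hβlam).mul_continuousOn ?_
    exact Continuous.continuousOn (by continuity))]
  have hsum : ∀ k ∈ Finset.range (n+1),
      (∫ t in (-1:ℝ)..1,
        (poch (α+1) n / n.factorial *
          (poch (-(n:ℝ)) k * poch ((n:ℝ)+α+β+1) k / (poch (α+1) k * k.factorial))) *
        ((1-t)^α * (1+t)^b * ((1-t)/2)^k))
      = (2^(α+b+1) * (poch (α+1) n / n.factorial) * betaR (α+1) (b+1)) *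
          (poch (-(n:ℝ)) k * poch ((n:ℝ)+α+β+1) k / (poch ((α+1)+(b+1)) k * k.factorial)) := by
    intro k _
    rw [intervalIntegral.integral_const_mul, step_k α b hα hβlam k,
      show α + (k:ℝ) + 1 = (α+1) + (k:ℝ) from by ring,
      betaR_shift (by linarith : (0:ℝ) < α+1) (by linarith : (0:ℝ) < b+1) k]
    have h1 : poch (α+1) k ≠ 0 := (poch_pos (by linarith) k).ne'
    have h2 : poch ((α+1)+(b+1)) k ≠ 0 := (poch_pos (by linarith) k).ne'
    have h3 : ((k.factorial : ℝ)) ≠ 0 := by positivity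
    field_simp
  rw [Finset.sum_congr rfl hsum, ← Finset.mul_sum,
    vandermonde' n (by linarith : (0:ℝ) < (α+1)+(b+1)) ((n:ℝ)+α+β+1),
    show (α+1)+(b+1) - ((n:ℝ)+α+β+1) = 1 - lam - (n:ℝ) from by rw [hbdef]; ring,
    poch_reflect lam n]
  have hrhs : betaR (α + n + 1) (b + 1)
      = poch (α+1) n / poch ((α+1)+(b+1)) n * betaR (α+1) (b+1) := by
    rw [show α + (n:ℝ) + 1 = (α+1) + (n:ℝ) from by ring,
      betaR_shift (by linarith : (0:ℝ) < α+1) (by linarith : (0:ℝ) < b+1) n]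
  rw [hrhs, genBinom, show α + β - lam + 1 = α + b + 1 from by rw [hbdef]; ring]
  have h4 : poch ((α+1)+(b+1)) n ≠ 0 := (poch_pos (by linarith) n).ne'
  field_simp
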